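/- Let e = ±f_{t₁,…,t_m} ∈ V₁ be a sign tuple, different from f₁, in the component of f₁ = (1). Then there exists a path e → f₁ in the sign-deletion graph whose label pattern has the form (i₁,…,i_T, t₁, t₁−1, …, x) where x ∈ {1,2}, x = 1 whenever t₁ = 1, and i_j > t₁ + 1 for all j = 1,…,T. -/

import Mathlib

/-- The alternating sign tuple `f_t = (1, −1, 1, …, (−1)^{t−1})`, with `+1 = true`. -/
def falt (t : ℕ) : List Bool := (List.range t).map fun j => decide (j % 2 = 0)

/-- Negation of a sign tuple. -/
def negT (l : List Bool) : List Bool := l.map not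

/-- `Edge l i l'`: the edge labeled `i` (1-indexed) of the sign-deletion graph; it requires
`1 ≤ i ≤ k−1`, `e_i = e_{i+1}`, and deletes the `i`-th and `(i+1)`-th entries of `l`. -/
def Edge (l : List Bool) (i : ℕ) (l' : List Bool) : Prop :=
  1 ≤ i ∧ i + 1 ≤ l.length ∧ l[i - 1]? = l[i]? ∧ l' = l.take (i - 1) ++ l.drop (i + 1)

/-- `PathP l pat l'`: a path from `l` to `l'` in the sign-deletion graph whose sequence
of edge labels (its pattern) is `pat`. -/
inductive PathP : List Bool → List ℕ → List Bool → Prop where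
  | nil (l : List Bool) : PathP l [] l
  | cons {l l' l'' : List Bool} {i : ℕ} {is : List ℕ} :
      Edge l i l' → PathP l' is l'' → PathP l (i :: is) l''

/-- The terminal vertex `sign(t)·f_{|t|}` attached to `t ∈ ℤ`. -/
def target (t : ℤ) : List Bool := if 0 ≤ t then falt t.toNat else negT (falt (-t).toNat)

/-- `V_t`: the set of sign tuples admitting a path to `sign(t)·f_{|t|}`. -/
def Vmem (t : ℤ) (l : List Bool) : Prop := ∃ pat : List ℕ, PathP l pat (target t)

/-- The alternating tuple of length `t` starting with the sign `s`. -/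
def altFrom (s : Bool) : ℕ → List Bool
  | 0 => []
  | t + 1 => s :: altFrom (!s) t

/-- Auxiliary: concatenation of alternating blocks of lengths `ts`, starting with sign `s`,
each block starting with the sign ending the previous one (so adjacent entries agree
exactly at block junctions). -/
def fcatAux (s : Bool) : List ℕ → List Bool
  | [] => []
  | t :: ts => altFrom s t ++ fcatAux (if t % 2 = 1 then s else !s) ts

/-- `f_{t₁,…,t_m}`: the concatenation of alternating blocks of lengths `t₁,…,t_m`. -/
def fcat (ts : List ℕ) : List Bool := fcatAux true ts

/-- `sgn ε l` is `l` if `ε = +1` and `−l` if `ε = −1`. -/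
def sgn (e : Bool) (l : List Bool) : List Bool := if e then l else negT l

/-!
Deleting an equal adjacent pair is a cancellation in `ℤ/2 * ℤ/2`, so the freely reduced word
of a tuple is constant along paths, and every tuple reaches its reduced word. Write
`e = X ++ c :: c :: R`, where `X ++ [c]` is the first block. First reduce `R` to its reduced
word `W`, using only labels beyond `t₁ + 1`. The invariant forces `W = reduce (X.reverse ++ [1])`,
which is `X.reverse ++ [1]`, or `X.tail.reverse` when `X` starts with `1`. In both cases what is
left is `u.reverse ++ u` around the junction (followed by `[1]`, resp. preceded by `[1]`),
and deleting it from the middle outwards uses the labels `t₁, t₁ - 1, …` down to `1`, resp. `2`.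
-/

section

open List

theorem length_altFrom : ∀ (s : Bool) (n : ℕ), (altFrom s n).length = n
  | _, 0 => rfl
  | s, n + 1 => congrArg (· + 1) (length_altFrom (!s) n)

theorem altFrom_succ_eq_append : ∀ (s : Bool) (n : ℕ),
    altFrom s (n + 1) = altFrom s n ++ [if (n + 1) % 2 = 1 then s else !s]
  | s, 0 => by simp [altFrom]
  | s, n + 1 => by
    rw [altFrom, altFrom_succ_eq_append (!s) n, altFrom, cons_append]
    congr 3
    split_ifs <;> simp_all <;> omega

theorem isChain_altFrom : ∀ (s : Bool) (n : ℕ), (altFrom s n).IsChain (· ≠ ·)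
  | _, 0 => .nil
  | s, n + 1 => (isChain_altFrom (!s) n).cons (by cases n <;> simp [altFrom])

theorem negT_altFrom : ∀ (s : Bool) (n : ℕ), negT (altFrom s n) = altFrom (!s) n
  | _, 0 => rfl
  | s, n + 1 => congrArg ((!s) :: ·) (negT_altFrom (!s) n)

theorem negT_fcatAux : ∀ (s : Bool) (ts : List ℕ), negT (fcatAux s ts) = fcatAux (!s) ts
  | _, [] => rfl
  | s, t :: ts => by
    rw [fcatAux, fcatAux, negT, map_append, ← negT, ← negT, negT_altFrom, negT_fcatAux]
    split_ifs <;> rfl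

theorem sgn_fcat (ε : Bool) (ts : List ℕ) : sgn ε (fcat ts) = fcatAux ε ts := by
  cases ε
  · exact negT_fcatAux true ts
  · rfl

theorem fcatAux_singleton (s : Bool) (t : ℕ) : fcatAux s [t] = altFrom s t :=
  append_nil _

theorem fcatAux_cons_cons (s : Bool) (t r : ℕ) (ts : List ℕ) :
    ∃ (c : Bool) (R : List Bool), fcatAux s ((t + 1) :: (r + 1) :: ts) = altFrom s t ++ c :: c :: R :=
  ⟨_, _, by rw [fcatAux, fcatAux, altFrom_succ_eq_append, altFrom, append_assoc, singleton_append,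
    cons_append]⟩

end

namespace SignTuple

open List

def reduceCons (a : Bool) : List Bool → List Bool
  | [] => [a]
  | b :: l => if a = b then l else a :: b :: l

/-- Free reduction in `ℤ/2 * ℤ/2 = ⟨a, b | a², b²⟩`, reading `true`, `false` as `a`, `b`. -/
def reduce : List Bool → List Bool
  | [] => []
  | a :: l => reduceCons a (reduce l)

theorem isChain_reduceCons (a : Bool) {l : List Bool} (hl : l.IsChain (· ≠ ·)) :
    (reduceCons a l).IsChain (· ≠ ·) := by
  cases l with
  | nil => exact isChain_singleton a
  | cons b l =>
    by_cases hab : a = b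
    · simpa [reduceCons, hab] using hl.tail
    · rw [reduceCons, if_neg hab]
      exact hl.cons (by simpa using hab)

theorem isChain_reduce : ∀ l : List Bool, (reduce l).IsChain (· ≠ ·)
  | [] => .nil
  | a :: l => isChain_reduceCons a (isChain_reduce l)

theorem reduce_eq_self : ∀ {l : List Bool}, l.IsChain (· ≠ ·) → reduce l = l
  | [], _ => rfl
  | [_], _ => rfl
  | a :: b :: l, h => by
    rw [reduce, reduce_eq_self (l := b :: l) h.tail, reduceCons, if_neg (isChain_cons_cons.mp h).1]

theorem reduceCons_reduceCons (a : Bool) :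
    ∀ {l : List Bool}, l.IsChain (· ≠ ·) → reduceCons a (reduceCons a l) = l
  | [], _ => by simp [reduceCons]
  | [b], _ => by by_cases hab : a = b <;> simp [reduceCons, hab]
  | b :: c :: l, h => by
    have hbc := (isChain_cons_cons.mp h).1
    by_cases hab : a = b
    · subst hab
      simp [reduceCons, hbc]
    · simp [reduceCons, hab]

theorem reduce_append_cons_cons : ∀ (u : List Bool) (a : Bool) (v : List Bool),
    reduce (u ++ a :: a :: v) = reduce (u ++ v)
  | [], a, v => reduceCons_reduceCons a (isChain_reduce v)
  | b :: u, a, v => congrArg (reduceCons b) (reduce_append_cons_cons u a v)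

theorem reduce_append_reduce : ∀ u v : List Bool, reduce (u ++ reduce v) = reduce (u ++ v)
  | [], v => reduce_eq_self (isChain_reduce v)
  | a :: u, v => congrArg (reduceCons a) (reduce_append_reduce u v)

theorem reduce_reverse_append_append : ∀ u v : List Bool, reduce (u.reverse ++ (u ++ v)) = reduce v
  | [], _ => rfl
  | a :: u, v => by
    rw [reverse_cons, append_assoc, singleton_append, cons_append, reduce_append_cons_cons,
      reduce_reverse_append_append]

theorem reduce_reverse_append_singleton {X : List Bool} {b : Bool} (hX : X.IsChain (· ≠ ·))
    (hXb : X.head? ≠ some b) : reduce (X.reverse ++ [b]) = X.reverse ++ [b] := by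
  refine reduce_eq_self ((isChain_reverse.mpr (hX.imp fun _ _ h => h.symm)).append
    (isChain_singleton b) ?_)
  intro a ha y hy
  rw [getLast?_reverse] at ha
  rw [head?_cons, Option.mem_def, Option.some.injEq] at hy
  rintro rfl
  exact hXb (hy ▸ ha)

theorem reduce_reverse_cons_append_singleton {Y : List Bool} {b : Bool}
    (hY : (b :: Y).IsChain (· ≠ ·)) : reduce ((b :: Y).reverse ++ [b]) = Y.reverse := by
  rw [reverse_cons, append_assoc, singleton_append, reduce_append_cons_cons Y.reverse b [],
    append_nil, reduce_eq_self (l := Y.reverse) (isChain_reverse.mpr (hY.tail.imp fun _ _ h => h.symm))]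

end SignTuple

section

open List SignTuple

theorem edge_append_cons_cons (u v : List Bool) (c : Bool) :
    Edge (u ++ c :: c :: v) (u.length + 1) (u ++ v) := by
  refine ⟨le_add_self, by simp, ?_, ?_⟩
  · rw [Nat.add_sub_cancel, getElem?_append_right le_rfl, getElem?_append_right (by omega)]
    simp
  · rw [Nat.add_sub_cancel, take_append_of_le_length le_rfl, take_length,
      show u ++ c :: c :: v = (u ++ [c, c]) ++ v by simp, drop_left' (by simp)]

theorem Edge.append_left {l l' : List Bool} {i : ℕ} (u : List Bool) (h : Edge l i l') :
    Edge (u ++ l) (i + u.length) (u ++ l') := by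
  obtain ⟨h1, h2, h3, h4⟩ := h
  refine ⟨by omega, by simp only [length_append]; omega, ?_, ?_⟩
  · rw [show i + u.length - 1 = u.length + (i - 1) by omega, add_comm i,
      getElem?_append_right (by omega), getElem?_append_right (by omega)]
    simpa using h3
  · rw [h4, take_append, drop_append, take_of_length_le (l := u) (by omega),
      drop_eq_nil_of_le (as := u) (by omega), show i + u.length - 1 - u.length = i - 1 by omega,
      show i + u.length + 1 - u.length = i + 1 by omega]
    simp

theorem Edge.reduce_eq {l l' : List Bool} {i : ℕ} (h : Edge l i l') : reduce l' = reduce l := by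
  obtain ⟨h1, h2, h3, rfl⟩ := h
  have hi : i < l.length := by omega
  have hdrop : l.drop (i - 1) = l[i] :: l[i] :: l.drop (i + 1) := by
    rw [drop_eq_getElem_cons (by omega), drop_eq_getElem_cons (by omega : i - 1 + 1 < l.length)]
    simp only [getElem?_eq_getElem (by omega : i - 1 < l.length), getElem?_eq_getElem hi,
      Option.some.injEq] at h3
    simp [h3, show i - 1 + 1 = i by omega]
  rw [← reduce_append_cons_cons _ l[i], ← hdrop, take_append_drop]

namespace PathP

theorem reduce_eq {l m : List Bool} {pat : List ℕ} (h : PathP l pat m) : reduce l = reduce m := by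
  induction h with
  | nil => rfl
  | cons e _ ih => exact (Edge.reduce_eq e).symm.trans ih

theorem append {l m n : List Bool} {p q : List ℕ} (h₁ : PathP l p m) (h₂ : PathP m q n) :
    PathP l (p ++ q) n := by
  induction h₁ with
  | nil => exact h₂
  | cons e _ ih => exact .cons e (ih h₂)

theorem append_left (u : List Bool) {l m : List Bool} {p : List ℕ} (h : PathP l p m) :
    PathP (u ++ l) (p.map (· + u.length)) (u ++ m) := by
  induction h with
  | nil => exact .nil _
  | cons e _ ih => exact .cons (Edge.append_left u e) ih

theorem one_le_of_mem {l m : List Bool} {p : List ℕ} (h : PathP l p m) : ∀ i ∈ p, 1 ≤ i := by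
  induction h with
  | nil => simp
  | cons e _ ih => exact forall_mem_cons.mpr ⟨e.1, ih⟩

end PathP

theorem exists_pathP_reduce : ∀ l : List Bool, ∃ p, PathP l p (reduce l)
  | [] => ⟨[], .nil []⟩
  | a :: l => by
    obtain ⟨p, hp⟩ := exists_pathP_reduce l
    have hshift : PathP (a :: l) (p.map (· + 1)) (a :: reduce l) := hp.append_left [a]
    rw [reduce]
    match hl : reduce l with
    | [] => exact ⟨_, hl ▸ hshift⟩
    | b :: m =>
      by_cases hab : a = b
      · subst hab
        rw [reduceCons, if_pos rfl]
        exact ⟨_, (hl ▸ hshift).append (.cons (edge_append_cons_cons [] m a) (.nil m))⟩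
      · rw [reduceCons, if_neg hab]
        exact ⟨_, hl ▸ hshift⟩

theorem pathP_countdown (w v : List Bool) : ∀ u : List Bool,
    PathP (w ++ u.reverse ++ u ++ v) ((range u.length).map (w.length + u.length - ·)) (w ++ v)
  | [] => by simpa using .nil (w ++ v)
  | a :: u => by
    have hedge := edge_append_cons_cons (w ++ u.reverse) (u ++ v) a
    have ih := pathP_countdown w v u
    rw [append_assoc (w ++ u.reverse)] at ih
    have hsrc : w ++ (a :: u).reverse ++ a :: u ++ v = w ++ u.reverse ++ a :: a :: (u ++ v) := by
      simp
    have hpat : (range (a :: u).length).map (w.length + (a :: u).length - ·)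
        = ((w ++ u.reverse).length + 1) :: (range u.length).map (w.length + u.length - ·) := by
      simp only [length_cons, range_succ_eq_map, map_cons, map_map, length_append, length_reverse]
      congr 1
      exact map_congr_left fun j _ => by simp only [Function.comp_apply]; omega
    rw [hsrc, hpat]
    exact .cons hedge ih

theorem exists_pathP_countdown {X R : List Bool} {c b : Bool} (hX : X.IsChain (· ≠ ·))
    (h : reduce (X ++ c :: c :: R) = [b]) :
    ∃ (pre : List ℕ) (x : ℕ), (x = 1 ∨ x = 2) ∧ (X = [] → x = 1) ∧
      (∀ i ∈ pre, X.length + 2 < i) ∧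
      PathP (X ++ c :: c :: R)
        (pre ++ (range (X.length + 1 - x + 1)).map (X.length + 1 - ·)) [b] := by
  obtain ⟨p, hp⟩ := exists_pathP_reduce R
  set W := reduce R
  have hpre : PathP (X ++ c :: c :: R) (p.map (· + (X.length + 2))) (X ++ c :: c :: W) := by
    simpa using hp.append_left (X ++ [c, c])
  have hlabels : ∀ i ∈ p.map (· + (X.length + 2)), X.length + 2 < i := by
    simp only [mem_map, forall_exists_index, and_imp, forall_apply_eq_imp_iff₂]
    intro i hi
    have := hp.one_le_of_mem i hi
    omega
  -- `W` is determined by the invariant `reduce`: it must cancel `X` and leave `b`.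
  have hW : W = reduce (X.reverse ++ [b]) := by
    rw [← h, reduce_append_cons_cons, ← reduce_append_reduce X, reduce_append_reduce,
      reduce_reverse_append_append, reduce_eq_self (isChain_reduce R)]
  by_cases hXb : X.head? = some b
  · obtain ⟨Y, rfl⟩ := head?_eq_some_iff.mp hXb
    have hWY : W = Y.reverse := hW.trans (reduce_reverse_cons_append_singleton hX)
    refine ⟨_, 2, Or.inr rfl, by simp, hlabels, hpre.append ?_⟩
    have hcount := pathP_countdown [b] [] (c :: Y.reverse)
    simp only [reverse_cons, reverse_reverse, append_nil, cons_append, length_cons,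
      length_reverse] at hcount
    rw [hWY, length_cons, show Y.length + 1 + 1 - 2 + 1 = Y.length + 1 by omega]
    simpa [add_comm 1] using hcount
  · have hWX : W = X.reverse ++ [b] := hW.trans (reduce_reverse_append_singleton hX hXb)
    refine ⟨_, 1, Or.inl rfl, fun _ => rfl, hlabels, hpre.append ?_⟩
    have hcount := pathP_countdown [] [b] (c :: X.reverse)
    simp only [nil_append, reverse_cons, reverse_reverse, length_nil, zero_add, length_cons,
      length_reverse, append_assoc, cons_append] at hcount
    rw [hWX, Nat.add_sub_cancel]
    simpa using hcount

end

/-- if `e = ±f_{t₁,…,t_m} ∈ V₁` and `e ≠ f₁`, there is a path `e → f₁`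
whose pattern is `(i₁,…,i_T, t₁, t₁−1, …, x)` with `x ∈ {1,2}`, `x = 1` whenever
`t₁ = 1`, and every `i_j > t₁ + 1`. -/
theorem stmt_17 (ε : Bool) (t₁ : ℕ) (rest : List ℕ) (h₁ : 0 < t₁)
    (hr : ∀ x ∈ rest, 0 < x) (e : List Bool) (he : e = sgn ε (fcat (t₁ :: rest)))
    (hne : e ≠ falt 1) (h1 : Vmem 1 e) :
    ∃ (pre : List ℕ) (x : ℕ), (x = 1 ∨ x = 2) ∧ (t₁ = 1 → x = 1) ∧
      (∀ i ∈ pre, t₁ + 1 < i) ∧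
      PathP e (pre ++ (List.range (t₁ - x + 1)).map fun j => t₁ - j) (falt 1) := by
  obtain ⟨pat, hpat⟩ := h1
  have hred : SignTuple.reduce e = [true] := hpat.reduce_eq
  obtain ⟨n, rfl⟩ : ∃ n, t₁ = n + 1 := ⟨t₁ - 1, by omega⟩
  rw [sgn_fcat] at he
  cases rest with
  | nil =>
    rw [fcatAux_singleton] at he
    subst he
    exact absurd ((SignTuple.reduce_eq_self (isChain_altFrom ε _)).symm.trans hred) hne
  | cons r rest =>
    obtain ⟨r, rfl⟩ : ∃ r', r = r' + 1 := ⟨r - 1, by have := hr r (by simp); omega⟩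
    obtain ⟨c, R, hcR⟩ := fcatAux_cons_cons ε n r rest
    rw [hcR] at he
    subst he
    obtain ⟨pre, x, hx, hx₁, hpre, hp⟩ := exists_pathP_countdown (isChain_altFrom ε n) hred
    rw [length_altFrom] at hpre hp
    refine ⟨pre, x, hx, fun h => hx₁ ?_, hpre, hp⟩
    rw [show n = 0 by omega]
    rfl
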